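/- arXiv:1710.09177 — 2 statements merged into one kernel-verified Lean document; each statement's English description precedes it below -/
import Mathlib

section
/- If α < n/2, then C_{h,σ²}(A, αA) equals the supremum of I(X̄; X̄ + Z) over all laws of a scalar random variable X̄ ≥ 0 satisfying both: (i) P(X̄ > s_n A) = 0; and (ii) ∑_{k=1}^n ( (E[X̄·1{U = k}] − A·s_{k−1}·P(U = k))/h_k + (k−1)·A·P(U = k) ) ≤ αA, where U is the index of the interval containing X̄. -/
open MeasureTheory ProbabilityTheory Real Filter
open scoped NNReal ENNReal Classical

noncomputable section

/-- Kullback–Leibler divergence (Mathlib's `ProbabilityTheory.klDiv`). -/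
def klDiv {α : Type*} [MeasurableSpace α] (μ ν : Measure α) : EReal :=
  if μ ≪ ν ∧ Integrable (llr μ ν) μ then ((∫ x, llr μ ν x ∂μ : ℝ) : EReal) else ⊤

/-- Mutual information of a joint law: KL divergence of the joint law from the
product of its marginals. -/
def mutualInfo {α β : Type*} [MeasurableSpace α] [MeasurableSpace β]
    (joint : Measure (α × β)) : EReal :=
  klDiv joint ((joint.map Prod.fst).prod (joint.map Prod.snd))

/-- Partial sums `s_k = h_1 + ⋯ + h_k`. -/
def sCum {n : ℕ} (h : Fin n → ℝ) (k : ℕ) : ℝ :=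
  ∑ i : Fin n, if i.val < k then h i else 0

/-- Joint law of `(X, Y)` with `Y = hᵀX + Z`, `Z ~ N(0, v)` independent of `X`. -/
def misoJoint {n : ℕ} (h : Fin n → ℝ) (v : ℝ≥0) (μ : Measure (Fin n → ℝ)) :
    Measure ((Fin n → ℝ) × ℝ) :=
  (μ.prod (gaussianReal 0 v)).map (fun p => (p.1, (∑ k, h k * p.1 k) + p.2))

/-- MISO capacity under peak-power constraint `A` and average-power constraint `E`. -/
def misoCapacity {n : ℕ} (h : Fin n → ℝ) (v : ℝ≥0) (A E : ℝ) : EReal :=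
  ⨆ μ ∈ {μ : Measure (Fin n → ℝ) | IsProbabilityMeasure μ ∧
      (∀ k, ∀ᵐ x ∂μ, x k ∈ Set.Icc 0 A) ∧ (∑ k, ∫ x, x k ∂μ) ≤ E},
    mutualInfo (misoJoint h v μ)

/-- MISO capacity under only an average-power constraint `E`. -/
def misoCapacityAvg {n : ℕ} (h : Fin n → ℝ) (v : ℝ≥0) (E : ℝ) : EReal :=
  ⨆ μ ∈ {μ : Measure (Fin n → ℝ) | IsProbabilityMeasure μ ∧
      (∀ k, ∀ᵐ x ∂μ, 0 ≤ x k) ∧ (∑ k, ∫ x, x k ∂μ) ≤ E},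
    mutualInfo (misoJoint h v μ)

/-- Joint law of `(X̄, X̄ + Z)` for the unit-gain SISO channel. -/
def sisoJoint (v : ℝ≥0) (μ : Measure ℝ) : Measure (ℝ × ℝ) :=
  (μ.prod (gaussianReal 0 v)).map (fun p => (p.1, p.1 + p.2))

/-- Unit-gain SISO capacity under peak-power constraint `A` and average-power
constraint `E`. -/
def sisoCapacity (v : ℝ≥0) (A E : ℝ) : EReal :=
  ⨆ μ ∈ {μ : Measure ℝ | IsProbabilityMeasure μ ∧
      (∀ᵐ x ∂μ, x ∈ Set.Icc 0 A) ∧ (∫ x, x ∂μ) ≤ E},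
    mutualInfo (sisoJoint v μ)

/-- Unit-gain SISO capacity under only an average-power constraint `E`. -/
def sisoCapacityAvg (v : ℝ≥0) (E : ℝ) : EReal :=
  ⨆ μ ∈ {μ : Measure ℝ | IsProbabilityMeasure μ ∧
      (∀ᵐ x ∂μ, 0 ≤ x) ∧ (∫ x, x ∂μ) ≤ E},
    mutualInfo (sisoJoint v μ)

/-- The interval `(s_{k-1} A, s_k A]` (with the first one being `[0, s_1 A]`)
corresponding to the event `U = k` (0-indexed: `k ∈ Fin n` stands for `k+1`). -/
def uInterval {n : ℕ} (h : Fin n → ℝ) (A : ℝ) (k : Fin n) : Set ℝ :=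
  if k.val = 0 then Set.Icc 0 (sCum h 1 * A)
  else Set.Ioc (sCum h k.val * A) (sCum h (k.val + 1) * A)

/-- The average input power `∑_k p_k ((E[X̄ | U=k] - A s_{k-1})/h_k + (k-1) A)`
consumed to generate a scalar law of `X̄`. -/
def avgPowerUse {n : ℕ} (h : Fin n → ℝ) (A : ℝ) (μ : Measure ℝ) : ℝ :=
  ∑ k : Fin n,
    (((∫ x in uInterval h A k, x ∂μ) - A * sCum h k.val * (μ (uInterval h A k)).toReal) / h k
      + (k.val : ℝ) * A * (μ (uInterval h A k)).toReal)

/-- The threshold `α_th`. -/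
def alphaTh {n : ℕ} (h : Fin n → ℝ) : ℝ :=
  1 / 2 + (1 / sCum h n) * ∑ k : Fin n, h k * (k.val : ℝ)


end

/-!
The output `h ⬝ᵥ X + Z` depends on `X` only through the scalar `h ⬝ᵥ X`: given `X = x` it has the
Gaussian density centred at `h ⬝ᵥ x`. Hence the information density of `(X, Y)` factors through
`(h ⬝ᵥ X, Y)`, and `I(X; Y) = I(h ⬝ᵥ X; h ⬝ᵥ X + Z)`.

It remains to match the constraints. For `x ∈ [0, A]ⁿ` the scalar `t = h ⬝ᵥ x` lies in
`[0, s_n A]`, and if `t` lies in the `k`-th interval then, `h` being nonincreasing, the total power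
`∑ x_j` is at least `(t - s_{k-1} A) / h_k + (k - 1) A`. This bound is attained by the vector with
the first `k - 1` LEDs at `A` and the `k`-th one at `(t - s_{k-1} A) / h_k`, so pushing a scalar law
forward along this minimal-power map gives an admissible input with the same law of `h ⬝ᵥ X`, whose
average power is exactly the left-hand side of (ii).
-/

lemma klDiv_map_eq_of_llr_ae_eq_comp {α β : Type*} [MeasurableSpace α] [MeasurableSpace β]
    {P R : Measure α} {R' : Measure β} {T : α → β} {L : β → ℝ}
    (hT : Measurable T) (hL : Measurable L) (hPR : P ≪ R) (hPR' : P.map T ≪ R')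
    (hllr : llr P R =ᵐ[P] L ∘ T) (hllr' : llr (P.map T) R' =ᵐ[P.map T] L) :
    klDiv (P.map T) R' = klDiv P R := by
  have hint : Integrable (llr (P.map T) R') (P.map T) ↔ Integrable (llr P R) P := by
    rw [integrable_congr hllr', integrable_congr hllr,
      integrable_map_measure hL.aestronglyMeasurable hT.aemeasurable]
  have hintegral : ∫ y, llr (P.map T) R' y ∂P.map T = ∫ x, llr P R x ∂P := by
    rw [integral_congr_ae hllr', integral_congr_ae hllr,
      integral_map hT.aemeasurable hL.aestronglyMeasurable, Function.comp_def]
  simp only [klDiv, hPR, hPR', true_and, hint, hintegral]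

noncomputable section GaussianChannel

variable {𝓧 : Type*} [MeasurableSpace 𝓧] {v : ℝ≥0} {f : 𝓧 → ℝ}

def gaussChannel (v : ℝ≥0) (μ : Measure 𝓧) (f : 𝓧 → ℝ) : Measure (𝓧 × ℝ) :=
  (μ.prod (gaussianReal 0 v)).map (fun p => (p.1, f p.1 + p.2))

def outputDensity (v : ℝ≥0) (μ : Measure 𝓧) (f : 𝓧 → ℝ) (y : ℝ) : ℝ≥0∞ :=
  ∫⁻ x, gaussianPDF (f x) v y ∂μ

@[fun_prop]
lemma measurable_gaussianPDF_comp {α : Type*} [MeasurableSpace α] {m y : α → ℝ}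
    (hm : Measurable m) (hy : Measurable y) (v : ℝ≥0) :
    Measurable (fun a => gaussianPDF (m a) v (y a)) :=
  measurable_uncurry_gaussianPDF.comp (hm.prodMk (measurable_const.prodMk hy))

lemma measurable_outputDensity (hf : Measurable f) (μ : Measure 𝓧) [SFinite μ] :
    Measurable (outputDensity v μ f) :=
  (measurable_gaussianPDF_comp (hf.comp measurable_snd) measurable_fst v).lintegral_prod_right'

lemma gaussChannel_eq_withDensity (hv : v ≠ 0) (hf : Measurable f) (μ : Measure 𝓧) [SFinite μ] :
    gaussChannel v μ f = (μ.prod volume).withDensity (fun p => gaussianPDF (f p.1) v p.2) := by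
  have hψ : Measurable (fun p : 𝓧 × ℝ => (p.1, f p.1 + p.2)) := by fun_prop
  have hd : Measurable (fun p : 𝓧 × ℝ => gaussianPDF (f p.1) v p.2) := by fun_prop
  ext s hs
  rw [gaussChannel, Measure.map_apply hψ hs, Measure.prod_apply (hψ hs), withDensity_apply _ hs,
    ← lintegral_indicator hs, lintegral_prod _ (hd.indicator hs).aemeasurable]
  refine lintegral_congr fun x => ?_
  have hshift : (gaussianReal 0 v).map (f x + ·) = gaussianReal (f x) v := by
    simpa using gaussianReal_map_const_add (μ := 0) (v := v) (f x)
  rw [show Prod.mk x ⁻¹' ((fun p => (p.1, f p.1 + p.2)) ⁻¹' s) = (f x + ·) ⁻¹' (Prod.mk x ⁻¹' s)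
      from rfl, ← Measure.map_apply (measurable_const_add (f x)) (measurable_prodMk_left hs),
    hshift, gaussianReal_apply _ hv, ← lintegral_indicator (measurable_prodMk_left hs)]
  rfl

lemma gaussianPDF_le (m : ℝ) (v : ℝ≥0) (y : ℝ) :
    gaussianPDF m v y ≤ ENNReal.ofReal (√(2 * π * v))⁻¹ := by
  refine ENNReal.ofReal_le_ofReal (mul_le_of_le_one_right (by positivity) ?_)
  exact exp_le_one_iff.2 (div_nonpos_of_nonpos_of_nonneg (by nlinarith [sq_nonneg (y - m)])
    (by positivity))

lemma outputDensity_ne_zero (hv : v ≠ 0) (hf : Measurable f) (μ : Measure 𝓧) [NeZero μ]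
    (y : ℝ) : outputDensity v μ f y ≠ 0 := by
  rw [outputDensity, ne_eq,
    lintegral_eq_zero_iff (measurable_gaussianPDF_comp hf measurable_const v)]
  intro h0
  obtain ⟨x, hx⟩ := h0.exists
  exact (gaussianPDF_pos _ hv y).ne' hx

lemma outputDensity_ne_top (μ : Measure 𝓧) [IsFiniteMeasure μ] (y : ℝ) :
    outputDensity v μ f y ≠ ∞ := by
  refine ne_top_of_le_ne_top ?_ (lintegral_mono fun x => gaussianPDF_le (f x) v y)
  rw [lintegral_const]
  exact ENNReal.mul_ne_top ENNReal.ofReal_ne_top (measure_ne_top μ _)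

lemma map_fst_gaussChannel (hf : Measurable f) (μ : Measure 𝓧) [SFinite μ] :
    (gaussChannel v μ f).map Prod.fst = μ := by
  rw [gaussChannel, Measure.map_map measurable_fst (by fun_prop)]
  exact (Measure.map_fst_prod).trans (by simp)

lemma map_snd_gaussChannel (hv : v ≠ 0) (hf : Measurable f) (μ : Measure 𝓧) [SFinite μ] :
    (gaussChannel v μ f).map Prod.snd = volume.withDensity (outputDensity v μ f) := by
  ext s hs
  rw [Measure.map_apply measurable_snd hs, gaussChannel_eq_withDensity hv hf,
    withDensity_apply _ (measurable_snd hs), withDensity_apply _ hs, ← Set.univ_prod,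
    ← Measure.prod_restrict, Measure.restrict_univ,
    lintegral_prod_symm _ (by fun_prop)]
  rfl

lemma mutualInfo_gaussChannel (hv : v ≠ 0) (hf : Measurable f) (μ : Measure 𝓧) [SFinite μ] :
    mutualInfo (gaussChannel v μ f)
      = klDiv (gaussChannel v μ f) (μ.prod (volume.withDensity (outputDensity v μ f))) := by
  rw [mutualInfo, map_fst_gaussChannel hf, map_snd_gaussChannel hv hf]

lemma gaussChannel_absolutelyContinuous (hv : v ≠ 0) (hf : Measurable f) (μ : Measure 𝓧)
    [SFinite μ] [NeZero μ] :
    gaussChannel v μ f ≪ μ.prod (volume.withDensity (outputDensity v μ f)) := by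
  rw [prod_withDensity_right (measurable_outputDensity hf μ),
    gaussChannel_eq_withDensity hv hf]
  exact (withDensity_absolutelyContinuous _ _).trans (withDensity_absolutelyContinuous'
    ((measurable_outputDensity hf μ).comp measurable_snd).aemeasurable
    (.of_forall fun p => outputDensity_ne_zero hv hf μ p.2))

lemma llr_gaussChannel (hv : v ≠ 0) (hf : Measurable f) (μ : Measure 𝓧)
    [IsFiniteMeasure μ] [NeZero μ] :
    llr (gaussChannel v μ f) (μ.prod (volume.withDensity (outputDensity v μ f)))
      =ᵐ[gaussChannel v μ f]
        fun p => log ((outputDensity v μ f p.2)⁻¹ * gaussianPDF (f p.1) v p.2).toReal := by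
  have : IsFiniteMeasure (gaussChannel v μ f) := by unfold gaussChannel; infer_instance
  have hr := measurable_outputDensity (v := v) hf μ
  have hac : gaussChannel v μ f ≪ μ.prod volume := by
    rw [gaussChannel_eq_withDensity hv hf]
    exact withDensity_absolutelyContinuous _ _
  have hdens : (gaussChannel v μ f).rnDeriv (μ.prod volume)
      =ᵐ[μ.prod volume] fun p => gaussianPDF (f p.1) v p.2 := by
    rw [gaussChannel_eq_withDensity hv hf]
    exact Measure.rnDeriv_withDensity _ (by fun_prop)
  have hne_zero : ∀ᵐ p ∂(μ.prod volume), outputDensity v μ f p.2 ≠ 0 :=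
    .of_forall fun p => outputDensity_ne_zero hv hf μ p.2
  have hne_top : ∀ᵐ p ∂(μ.prod volume), outputDensity v μ f p.2 ≠ ∞ :=
    .of_forall fun p => outputDensity_ne_top μ p.2
  have hright := Measure.rnDeriv_withDensity_right (gaussChannel v μ f) (μ.prod volume)
    (by fun_prop) hne_zero hne_top
  rw [prod_withDensity_right hr]
  filter_upwards [hac.ae_le hright, hac.ae_le hdens] with p hp hd
  show log _ = _
  rw [hp, hd]

theorem mutualInfo_gaussChannel_map (hv : v ≠ 0) (hf : Measurable f) (μ : Measure 𝓧)
    [IsProbabilityMeasure μ] :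
    mutualInfo (gaussChannel v (μ.map f) id) = mutualInfo (gaussChannel v μ f) := by
  have := Measure.isProbabilityMeasure_map (μ := μ) hf.aemeasurable
  have hT : Measurable (fun p : 𝓧 × ℝ => (f p.1, p.2)) := by fun_prop
  have hmap :
      gaussChannel v (μ.map f) id = (gaussChannel v μ f).map (fun p => (f p.1, p.2)) := by
    have hprod : (μ.map f).prod (gaussianReal 0 v)
        = (μ.prod (gaussianReal 0 v)).map (Prod.map f id) := by
      simpa using Measure.map_prod_map μ (gaussianReal 0 v) hf measurable_id
    rw [gaussChannel, gaussChannel, hprod, Measure.map_map hT (by fun_prop),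
      Measure.map_map (by fun_prop) (by fun_prop)]
    rfl
  have hout : outputDensity v (μ.map f) id = outputDensity v μ f := by
    ext y
    exact lintegral_map (measurable_gaussianPDF_comp measurable_id measurable_const v) hf
  have hr := measurable_outputDensity (v := v) hf μ
  have hllr := llr_gaussChannel hv measurable_id (μ.map f)
  rw [hout, hmap] at hllr
  rw [mutualInfo_gaussChannel hv measurable_id, mutualInfo_gaussChannel hv hf, hout, hmap]
  refine klDiv_map_eq_of_llr_ae_eq_comp hT
    (L := fun q => log ((outputDensity v μ f q.2)⁻¹ * gaussianPDF q.1 v q.2).toReal) (by fun_prop)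
    (gaussChannel_absolutelyContinuous hv hf μ) ?_ (llr_gaussChannel hv hf μ) hllr
  rw [← hmap, ← hout]
  exact gaussChannel_absolutelyContinuous hv measurable_id _

end GaussianChannel

section PartialSums

variable {n : ℕ} {h : Fin n → ℝ}

lemma sCum_zero (h : Fin n → ℝ) : sCum h 0 = 0 := by simp [sCum]

lemma sCum_succ (k : Fin n) : sCum h (k + 1) = sCum h k + h k := by
  simp only [sCum, ← Finset.sum_filter]
  rw [show Finset.univ.filter (fun i : Fin n => i.val < k + 1)
      = insert k (Finset.univ.filter (fun i : Fin n => i.val < k)) by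
        ext i; simp [Fin.ext_iff]; omega,
    Finset.sum_insert (by simp), add_comm]

lemma sCum_mono (h_nonneg : ∀ k, 0 ≤ h k) : Monotone (sCum h) := fun a b hab =>
  Finset.sum_le_sum fun i _ => by
    split_ifs <;> first | exact le_rfl | exact h_nonneg i | omega

lemma sCum_self (h : Fin n → ℝ) : sCum h n = ∑ i, h i := by simp [sCum]

lemma sum_ite_lt_eq_sCum (k : Fin n) (c : ℝ) :
    ∑ j, (if j < k then h j * c else 0) = sCum h k * c := by
  simp only [sCum, Finset.sum_mul, ite_mul, zero_mul, Fin.lt_def]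

lemma sum_ite_lt_const (k : Fin n) (c : ℝ) : ∑ j : Fin n, (if j < k then c else 0) = k * c := by
  rw [← Finset.sum_filter, Finset.filter_gt_eq_Iio, Finset.sum_const, Fin.card_Iio, nsmul_eq_mul]

end PartialSums

noncomputable section MinPowerInput

variable {n : ℕ} {h : Fin n → ℝ} {A : ℝ}

lemma mem_uInterval_bounds {k : Fin n} {t : ℝ} (ht : t ∈ uInterval h A k) :
    sCum h k * A ≤ t ∧ t ≤ sCum h (k + 1) * A := by
  unfold uInterval at ht
  split_ifs at ht with hk
  · simpa [hk, sCum_zero] using ht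
  · exact ⟨ht.1.le, ht.2⟩

lemma pairwise_disjoint_uInterval (hpos : ∀ k, 0 < h k) (hA : 0 ≤ A) :
    Pairwise fun j k => Disjoint (uInterval h A j) (uInterval h A k) := by
  refine (pairwise_disjoint_on _).2 fun j k hjk => Set.disjoint_left.2 fun t htj htk => ?_
  have hk : k.val ≠ 0 := by have := Fin.lt_def.1 hjk; omega
  simp only [uInterval, hk, if_false, Set.mem_Ioc] at htk
  have hle : sCum h (j + 1) * A ≤ sCum h k * A :=
    mul_le_mul_of_nonneg_right (sCum_mono (fun i => (hpos i).le) (Fin.lt_def.1 hjk)) hA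
  linarith [(mem_uInterval_bounds htj).2, htk.1]

lemma exists_mem_uInterval (hn : 0 < n) {t : ℝ} (ht : t ∈ Set.Icc 0 (sCum h n * A)) :
    ∃ k, t ∈ uInterval h A k := by
  have hex : ∃ m, 0 < m ∧ t ≤ sCum h m * A := ⟨n, hn, ht.2⟩
  obtain ⟨hm0, hmt⟩ := Nat.find_spec hex
  have hmn : Nat.find hex ≤ n := Nat.find_min' hex ⟨hn, ht.2⟩
  refine ⟨⟨Nat.find hex - 1, by omega⟩, ?_⟩
  have hsucc : Nat.find hex - 1 + 1 = Nat.find hex := by omega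
  unfold uInterval
  split_ifs with h1
  · exact ⟨ht.1, by rwa [show 1 = Nat.find hex by simp at h1; omega]⟩
  · have hprev := Nat.find_min hex (show Nat.find hex - 1 < Nat.find hex by omega)
    simp only [not_and, not_le] at hprev
    exact ⟨hprev (by simp at h1; omega), by rwa [hsucc]⟩

/-- The least total power `∑ x_j` of an `x ∈ [0, A]ⁿ` with `h ⬝ᵥ x = t`,
for `t ∈ uInterval h A k`. -/
def minPower (h : Fin n → ℝ) (A : ℝ) (k : Fin n) (t : ℝ) : ℝ :=
  (t - sCum h k * A) / h k + k * A

def minPowerVec (h : Fin n → ℝ) (A : ℝ) (k : Fin n) (t : ℝ) : Fin n → ℝ :=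
  fun j => if j < k then A else if j = k then (t - sCum h k * A) / h k else 0

def minPowerMap (h : Fin n → ℝ) (A : ℝ) (t : ℝ) : Fin n → ℝ :=
  ∑ k, (uInterval h A k).indicator (minPowerVec h A k) t

lemma minPowerVec_apply_eq (k j : Fin n) (t : ℝ) :
    minPowerVec h A k t j
      = (if j < k then A else 0) + (if j = k then (t - sCum h k * A) / h k else 0) := by
  rcases lt_trichotomy j k with hj | rfl | hj
  · simp [minPowerVec, hj, hj.ne]
  · simp [minPowerVec]
  · simp [minPowerVec, hj.ne', hj.not_gt]

lemma dotProduct_minPowerVec (hpos : ∀ k, 0 < h k) (k : Fin n) (t : ℝ) :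
    h ⬝ᵥ minPowerVec h A k t = t := by
  simp only [dotProduct, minPowerVec_apply_eq, mul_add, Finset.sum_add_distrib, mul_ite, mul_zero,
    Finset.sum_ite_eq', Finset.mem_univ, if_true]
  rw [sum_ite_lt_eq_sCum, mul_div_cancel₀ _ (hpos k).ne']
  ring

lemma sum_minPowerVec (k : Fin n) (t : ℝ) : ∑ j, minPowerVec h A k t j = minPower h A k t := by
  simp only [minPowerVec_apply_eq, Finset.sum_add_distrib, sum_ite_lt_const, Finset.sum_ite_eq',
    Finset.mem_univ, if_true, minPower]
  ring

lemma minPowerVec_mem_Icc (hpos : ∀ k, 0 < h k) (hA : 0 ≤ A) {k : Fin n} {t : ℝ}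
    (ht : t ∈ uInterval h A k) (j : Fin n) : minPowerVec h A k t j ∈ Set.Icc 0 A := by
  obtain ⟨hlo, hhi⟩ := mem_uInterval_bounds ht
  rw [sCum_succ] at hhi
  unfold minPowerVec
  split_ifs
  · exact ⟨hA, le_rfl⟩
  · exact ⟨div_nonneg (by linarith) (hpos k).le, (div_le_iff₀ (hpos k)).2 (by linarith)⟩
  · exact ⟨le_rfl, hA⟩

lemma minPowerMap_eq_of_mem (hpos : ∀ k, 0 < h k) (hA : 0 ≤ A) {k : Fin n} {t : ℝ}
    (ht : t ∈ uInterval h A k) : minPowerMap h A t = minPowerVec h A k t := by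
  rw [minPowerMap, Finset.sum_eq_single k (fun j _ hjk => Set.indicator_of_notMem
    (Set.disjoint_right.1 (pairwise_disjoint_uInterval hpos hA hjk) ht) _) (by simp),
    Set.indicator_of_mem ht]

lemma minPowerMap_eq_zero {t : ℝ} (ht : ∀ k, t ∉ uInterval h A k) : minPowerMap h A t = 0 :=
  Finset.sum_eq_zero fun k _ => Set.indicator_of_notMem (ht k) _

lemma minPowerMap_mem_Icc (hpos : ∀ k, 0 < h k) (hA : 0 ≤ A) (t : ℝ) (j : Fin n) :
    minPowerMap h A t j ∈ Set.Icc 0 A := by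
  by_cases ht : ∃ k, t ∈ uInterval h A k
  · obtain ⟨k, hk⟩ := ht
    rw [minPowerMap_eq_of_mem hpos hA hk]
    exact minPowerVec_mem_Icc hpos hA hk j
  · simp only [not_exists] at ht
    rw [minPowerMap_eq_zero ht]
    exact ⟨le_rfl, hA⟩

lemma dotProduct_minPowerMap (hpos : ∀ k, 0 < h k) (hA : 0 ≤ A) (hn : 0 < n) {t : ℝ}
    (ht : t ∈ Set.Icc 0 (sCum h n * A)) : h ⬝ᵥ minPowerMap h A t = t := by
  obtain ⟨k, hk⟩ := exists_mem_uInterval hn ht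
  rw [minPowerMap_eq_of_mem hpos hA hk, dotProduct_minPowerVec hpos]

lemma sum_minPowerMap (hpos : ∀ k, 0 < h k) (hA : 0 ≤ A) (t : ℝ) :
    ∑ j, minPowerMap h A t j = ∑ k, (uInterval h A k).indicator (minPower h A k) t := by
  by_cases ht : ∃ k, t ∈ uInterval h A k
  · obtain ⟨k, hk⟩ := ht
    rw [minPowerMap_eq_of_mem hpos hA hk, sum_minPowerVec, Finset.sum_eq_single k
      (fun j _ hjk => Set.indicator_of_notMem
        (Set.disjoint_right.1 (pairwise_disjoint_uInterval hpos hA hjk) hk) _) (by simp),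
      Set.indicator_of_mem hk]
  · simp only [not_exists] at ht
    simp [minPowerMap_eq_zero ht, Set.indicator_of_notMem (ht _)]

/-- Termwise, `(h j - h k) (A - x j) ≥ 0` for `j < k` and `(h k - h j) x j ≥ 0` for `k ≤ j`. -/
lemma minPower_dotProduct_le_sum (hanti : Antitone h) (hpos : ∀ k, 0 < h k) {x : Fin n → ℝ}
    (hx : ∀ j, x j ∈ Set.Icc 0 A) (k : Fin n) : minPower h A k (h ⬝ᵥ x) ≤ ∑ j, x j := by
  have htermwise : h ⬝ᵥ x
      ≤ ∑ j, ((if j < k then h j * A else 0) - (if j < k then h k * A else 0) + h k * x j) := by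
    refine Finset.sum_le_sum fun j _ => ?_
    obtain ⟨hx0, hxA⟩ := hx j
    by_cases hj : j < k
    · simp only [hj, if_true]
      nlinarith [hanti hj.le]
    · simp only [hj, if_false, sub_zero, zero_add]
      nlinarith [hanti (not_lt.1 hj)]
  rw [Finset.sum_add_distrib, Finset.sum_sub_distrib, sum_ite_lt_eq_sCum, sum_ite_lt_const,
    ← Finset.mul_sum] at htermwise
  rw [minPower, div_add' _ _ _ (hpos k).ne', div_le_iff₀ (hpos k)]
  linarith

lemma measurableSet_uInterval (k : Fin n) : MeasurableSet (uInterval h A k) := by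
  unfold uInterval
  split_ifs
  exacts [measurableSet_Icc, measurableSet_Ioc]

@[fun_prop]
lemma measurable_minPowerMap : Measurable (minPowerMap h A) := by
  refine Finset.measurable_sum _ fun k _ => Measurable.indicator ?_ (measurableSet_uInterval k)
  refine measurable_pi_lambda _ fun j => ?_
  unfold minPowerVec
  split_ifs <;> fun_prop

lemma Continuous.integrableOn_uInterval {g : ℝ → ℝ} (hg : Continuous g) (ν : Measure ℝ)
    [IsFiniteMeasure ν] (k : Fin n) : IntegrableOn g (uInterval h A k) ν :=
  hg.integrableOn_Icc.mono_set fun _ ht => mem_uInterval_bounds ht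

lemma setIntegral_minPower (ν : Measure ℝ) [IsFiniteMeasure ν] (k : Fin n) :
    ∫ t in uInterval h A k, minPower h A k t ∂ν
      = ((∫ t in uInterval h A k, t ∂ν) - A * sCum h k * (ν (uInterval h A k)).toReal) / h k
        + k * A * (ν (uInterval h A k)).toReal := by
  have hid := continuous_id'.integrableOn_uInterval (h := h) (A := A) ν k
  have hdiv := (show Continuous fun t => (t - sCum h k * A) / h k by fun_prop)
    |>.integrableOn_uInterval (h := h) (A := A) ν k
  unfold minPower
  rw [integral_add hdiv (integrable_const _), integral_div, integral_sub hid (integrable_const _),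
    setIntegral_const, setIntegral_const, smul_eq_mul, smul_eq_mul, Measure.real]
  ring

lemma avgPowerUse_eq_integral (hpos : ∀ k, 0 < h k) (hA : 0 ≤ A) (ν : Measure ℝ)
    [IsFiniteMeasure ν] : avgPowerUse h A ν = ∫ t, ∑ j, minPowerMap h A t j ∂ν := by
  simp_rw [sum_minPowerMap hpos hA]
  rw [integral_finsetSum _ fun k _ => (integrable_indicator_iff (measurableSet_uInterval k)).2
    ((show Continuous (minPower h A k) by unfold minPower; fun_prop).integrableOn_uInterval ν k)]
  refine Finset.sum_congr rfl fun k _ => ?_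
  rw [integral_indicator (measurableSet_uInterval k), setIntegral_minPower]

end MinPowerInput

section Feasibility

variable {n : ℕ} {h : Fin n → ℝ} {A : ℝ}

@[fun_prop]
lemma measurable_dotProduct_left (h : Fin n → ℝ) : Measurable (h ⬝ᵥ ·) := by
  unfold dotProduct
  fun_prop

lemma ae_map_dotProduct_mem_Icc (hpos : ∀ k, 0 < h k) (μ : Measure (Fin n → ℝ))
    (hbox : ∀ k, ∀ᵐ x ∂μ, x k ∈ Set.Icc 0 A) :
    ∀ᵐ t ∂μ.map (h ⬝ᵥ ·), t ∈ Set.Icc 0 (sCum h n * A) := by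
  refine (ae_map_iff (measurable_dotProduct_left h).aemeasurable measurableSet_Icc).2 ?_
  filter_upwards [ae_all_iff.2 hbox] with x hx
  rw [sCum_self, Finset.sum_mul]
  exact ⟨Finset.sum_nonneg fun k _ => mul_nonneg (hpos k).le (hx k).1,
    Finset.sum_le_sum fun k _ => mul_le_mul_of_nonneg_left (hx k).2 (hpos k).le⟩

lemma sum_minPowerMap_dotProduct_le (hanti : Antitone h) (hpos : ∀ k, 0 < h k) (hA : 0 ≤ A)
    {x : Fin n → ℝ} (hx : ∀ j, x j ∈ Set.Icc 0 A) :
    ∑ j, minPowerMap h A (h ⬝ᵥ x) j ≤ ∑ j, x j := by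
  by_cases hmem : ∃ k, h ⬝ᵥ x ∈ uInterval h A k
  · obtain ⟨k, hk⟩ := hmem
    rw [minPowerMap_eq_of_mem hpos hA hk, sum_minPowerVec]
    exact minPower_dotProduct_le_sum hanti hpos hx k
  · simp only [not_exists] at hmem
    simpa [minPowerMap_eq_zero hmem] using Finset.sum_nonneg fun j _ => (hx j).1

lemma integrable_of_ae_mem_Icc {α : Type*} [MeasurableSpace α] {μ : Measure α}
    [IsFiniteMeasure μ] {g : α → ℝ} (hg : Measurable g) (hbound : ∀ᵐ a ∂μ, g a ∈ Set.Icc 0 A) :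
    Integrable g μ :=
  (integrable_const A).mono' hg.aestronglyMeasurable <| by
    filter_upwards [hbound] with a ha
    rw [Real.norm_eq_abs, abs_of_nonneg ha.1]
    exact ha.2

lemma integrable_minPowerMap_apply (hpos : ∀ k, 0 < h k) (hA : 0 ≤ A) (ν : Measure ℝ)
    [IsFiniteMeasure ν] (j : Fin n) : Integrable (fun t => minPowerMap h A t j) ν :=
  integrable_of_ae_mem_Icc (by fun_prop) (.of_forall fun t => minPowerMap_mem_Icc hpos hA t j)

lemma avgPowerUse_map_dotProduct_le (hanti : Antitone h) (hpos : ∀ k, 0 < h k) (hA : 0 ≤ A)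
    (μ : Measure (Fin n → ℝ)) [IsFiniteMeasure μ] (hbox : ∀ k, ∀ᵐ x ∂μ, x k ∈ Set.Icc 0 A) :
    avgPowerUse h A (μ.map (h ⬝ᵥ ·)) ≤ ∑ k, ∫ x, x k ∂μ := by
  have hmeas := measurable_dotProduct_left h
  have hcoord : ∀ j, Integrable (fun x : Fin n → ℝ => x j) μ := fun j =>
    integrable_of_ae_mem_Icc (measurable_pi_apply j) (hbox j)
  have hpower : Integrable (fun t => ∑ j, minPowerMap h A t j) (μ.map (h ⬝ᵥ ·)) :=
    integrable_finsetSum _ fun j _ => integrable_minPowerMap_apply hpos hA _ j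
  rw [avgPowerUse_eq_integral hpos hA, integral_map hmeas.aemeasurable (by fun_prop),
    ← integral_finsetSum _ fun j _ => hcoord j]
  refine integral_mono_ae (hpower.comp_measurable hmeas)
    (integrable_finsetSum _ fun j _ => hcoord j) ?_
  filter_upwards [ae_all_iff.2 hbox] with x hx
  exact sum_minPowerMap_dotProduct_le hanti hpos hA hx

lemma ae_map_minPowerMap_mem_Icc (hpos : ∀ k, 0 < h k) (hA : 0 ≤ A) (ν : Measure ℝ) (k : Fin n) :
    ∀ᵐ x ∂ν.map (minPowerMap h A), x k ∈ Set.Icc 0 A :=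
  (ae_map_iff measurable_minPowerMap.aemeasurable (measurable_pi_apply k measurableSet_Icc)).2
    (.of_forall fun t => minPowerMap_mem_Icc hpos hA t k)

lemma sum_integral_map_minPowerMap (hpos : ∀ k, 0 < h k) (hA : 0 ≤ A) (ν : Measure ℝ)
    [IsFiniteMeasure ν] : ∑ k, ∫ x, x k ∂ν.map (minPowerMap h A) = avgPowerUse h A ν := by
  simp_rw [integral_map measurable_minPowerMap.aemeasurable
    (measurable_pi_apply _).aestronglyMeasurable]
  rw [← integral_finsetSum _ fun j _ => integrable_minPowerMap_apply hpos hA ν j,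
    avgPowerUse_eq_integral hpos hA]

lemma map_minPowerMap_map_dotProduct (hpos : ∀ k, 0 < h k) (hA : 0 ≤ A) (hn : 0 < n)
    (ν : Measure ℝ) (hsupp : ∀ᵐ t ∂ν, t ∈ Set.Icc 0 (sCum h n * A)) :
    (ν.map (minPowerMap h A)).map (h ⬝ᵥ ·) = ν := by
  rw [Measure.map_map (measurable_dotProduct_left h) measurable_minPowerMap]
  conv_rhs => rw [← Measure.map_id (μ := ν)]
  exact Measure.map_congr (hsupp.mono fun t ht => dotProduct_minPowerMap hpos hA hn ht)

end Feasibility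

lemma mutualInfo_misoJoint {n : ℕ} (h : Fin n → ℝ) {v : ℝ≥0} (hv : v ≠ 0)
    (μ : Measure (Fin n → ℝ)) [IsProbabilityMeasure μ] :
    mutualInfo (misoJoint h v μ) = mutualInfo (sisoJoint v (μ.map (h ⬝ᵥ ·))) :=
  (mutualInfo_gaussChannel_map hv (measurable_dotProduct_left h) μ).symm

theorem miso_capacity_equiv_scalar_general (n : ℕ) (hn : 2 ≤ n) (h : Fin n → ℝ)
    (hord : ∀ i j : Fin n, i ≤ j → h j ≤ h i) (hpos : ∀ k, 0 < h k)
    (v : ℝ≥0) (hv : 0 < v)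
    (A α : ℝ) (hA : 0 < A) :
    misoCapacity h v A (α * A)
      = ⨆ μ ∈ {μ : Measure ℝ | IsProbabilityMeasure μ ∧
          (∀ᵐ x ∂μ, 0 ≤ x) ∧ μ {x | sCum h n * A < x} = 0 ∧
          avgPowerUse h A μ ≤ α * A},
        mutualInfo (sisoJoint v μ) := by
  apply le_antisymm
  · refine iSup₂_le fun μ ⟨hprob, hbox, hpow⟩ => ?_
    have hsupp := ae_map_dotProduct_mem_Icc hpos μ hbox
    refine le_iSup₂_of_le (μ.map (h ⬝ᵥ ·)) ⟨Measure.isProbabilityMeasure_map (by fun_prop),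
      hsupp.mono fun t ht => ht.1,
      measure_eq_zero_iff_ae_notMem.2 (hsupp.mono fun t ht => not_lt.2 ht.2),
      (avgPowerUse_map_dotProduct_le hord hpos hA.le μ hbox).trans hpow⟩ ?_
    rw [mutualInfo_misoJoint h hv.ne' μ]
  · refine iSup₂_le fun ν ⟨hprob, hnonneg, htop, hpow⟩ => ?_
    have hsupp : ∀ᵐ t ∂ν, t ∈ Set.Icc 0 (sCum h n * A) := by
      filter_upwards [hnonneg, measure_eq_zero_iff_ae_notMem.1 htop] with t ht0 ht
      exact ⟨ht0, not_lt.1 ht⟩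
    have := Measure.isProbabilityMeasure_map (μ := ν)
      (measurable_minPowerMap (h := h) (A := A)).aemeasurable
    refine le_iSup₂_of_le (ν.map (minPowerMap h A)) ⟨this,
      ae_map_minPowerMap_mem_Icc hpos hA.le ν,
      (sum_integral_map_minPowerMap hpos hA.le ν).trans_le hpow⟩ ?_
    rw [mutualInfo_misoJoint h hv.ne',
      map_minPowerMap_map_dotProduct hpos hA.le (by omega) ν hsupp]

theorem miso_capacity_equiv_scalar (n : ℕ) (hn : 2 ≤ n) (h : Fin n → ℝ)
    (hord : ∀ i j : Fin n, i ≤ j → h j ≤ h i) (hpos : ∀ k, 0 < h k)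
    (v : ℝ≥0) (hv : 0 < v)
    (A α : ℝ) (hA : 0 < A) (hα0 : 0 < α) (hα : α < (n : ℝ) / 2) :
    misoCapacity h v A (α * A)
      = ⨆ μ ∈ {μ : Measure ℝ | IsProbabilityMeasure μ ∧
          (∀ᵐ x ∂μ, 0 ≤ x) ∧ μ {x | sCum h n * A < x} = 0 ∧
          avgPowerUse h A μ ≤ α * A},
        mutualInfo (sisoJoint v μ) :=
  miso_capacity_equiv_scalar_general n hn h hord hpos v hv A α hA
end

section
/- For every 0 < α ≤ n and A > 0, the MISO capacity is upper-bounded by the SISO capacity: C_{h,σ²}(A, αA) ≤ C_{1,σ²}(s_n A, s_n A / 2). -/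
open MeasureTheory ProbabilityTheory Real Filter
open scoped NNReal ENNReal Classical

/-! The output `Y = h·X + Z` depends on `X` only through the scalar `X̄ = h·X`, which lies in
`[0, s_n A]`. For an additive Gaussian channel with input statistic `c`, the joint law of
`(X, Y)` has a density with respect to the product of its marginals that is a function of
`(c X, Y)` alone, so `I(X; Y) = I(c X; c X + Z)`. If `E[X̄] > s_n A / 2`, the input
`s_n A - X̄` has mean at most `s_n A / 2`; since `Z` is symmetric, the pair
`(s_n A - X̄, s_n A - Y)` is distributed as input and output of the channel fed with that
input, so by the data processing inequality the reflection loses no information. -/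

noncomputable section

section KullbackLeibler

variable {β γ β' γ' : Type*} [MeasurableSpace β] [MeasurableSpace γ] [MeasurableSpace β']
  [MeasurableSpace γ']

theorem klDiv_withDensity (ν : Measure β) [SigmaFinite ν] {g : β → ℝ≥0∞} (hg : Measurable g) :
    klDiv (ν.withDensity g) ν =
      if Integrable (fun x => log (g x).toReal) (ν.withDensity g)
      then ((∫ x, log (g x).toReal ∂ν.withDensity g : ℝ) : EReal) else ⊤ := by
  have hac : ν.withDensity g ≪ ν := withDensity_absolutelyContinuous _ _
  have hllr : llr (ν.withDensity g) ν =ᵐ[ν.withDensity g] fun x => log (g x).toReal := by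
    filter_upwards [hac.ae_le (Measure.rnDeriv_withDensity ν hg)] with x hx
    simp only [llr_def, hx]
  rw [klDiv, integrable_congr hllr, integral_congr_ae hllr]
  exact if_congr (and_iff_right hac) rfl rfl

lemma map_withDensity_comp (ν : Measure β) {T : β → γ} (hT : Measurable T) {g : γ → ℝ≥0∞}
    (hg : Measurable g) : (ν.withDensity (g ∘ T)).map T = (ν.map T).withDensity g := by
  ext s hs
  rw [Measure.map_apply hT hs, withDensity_apply _ (hT hs), withDensity_apply _ hs,
    setLIntegral_map hs hg hT]
  rfl

theorem klDiv_map_withDensity_comp (ν : Measure β) [SigmaFinite ν] {T : β → γ}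
    [SigmaFinite (ν.map T)] (hT : Measurable T) {g : γ → ℝ≥0∞} (hg : Measurable g) :
    klDiv ((ν.withDensity (g ∘ T)).map T) (ν.map T) = klDiv (ν.withDensity (g ∘ T)) ν := by
  have hlog : Measurable (fun y => log (g y).toReal) := by fun_prop
  rw [map_withDensity_comp ν hT hg, klDiv_withDensity _ hg, klDiv_withDensity _ (hg.comp hT),
    ← map_withDensity_comp ν hT hg,
    integrable_map_measure hlog.aestronglyMeasurable hT.aemeasurable,
    integral_map hT.aemeasurable hlog.aestronglyMeasurable]
  rfl

lemma klDiv_eq_coe_klDiv (μ ν : Measure β) [IsProbabilityMeasure μ] [IsProbabilityMeasure ν] :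
    klDiv μ ν = (InformationTheory.klDiv μ ν : EReal) := by
  by_cases h : μ ≪ ν ∧ Integrable (llr μ ν) μ
  · have hgibbs := InformationTheory.integral_llr_add_sub_measure_univ_nonneg h.1 h.2
    simp only [probReal_univ, add_sub_cancel_right] at hgibbs
    rw [klDiv, if_pos h, InformationTheory.klDiv_of_ac_of_integrable h.1 h.2, probReal_univ,
      probReal_univ, add_sub_cancel_right, EReal.coe_ennreal_ofReal, max_eq_left hgibbs]
  · rw [klDiv, if_neg h, InformationTheory.klDiv_eq_top_iff.mpr fun hac hint => h ⟨hac, hint⟩]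
    rfl

theorem klDiv_map_le (ρ ν : Measure β) [IsProbabilityMeasure ρ] [IsProbabilityMeasure ν]
    {T : β → γ} (hT : Measurable T) : klDiv (ρ.map T) (ν.map T) ≤ klDiv ρ ν := by
  have : IsProbabilityMeasure (ρ.map T) := Measure.isProbabilityMeasure_map hT.aemeasurable
  have : IsProbabilityMeasure (ν.map T) := Measure.isProbabilityMeasure_map hT.aemeasurable
  rw [klDiv_eq_coe_klDiv, klDiv_eq_coe_klDiv, EReal.coe_ennreal_le_coe_ennreal_iff]
  exact InformationTheory.klDiv_map_le _ _ hT

theorem mutualInfo_map_prodMap_le (ρ : Measure (β × γ)) [IsProbabilityMeasure ρ] {f : β → β'}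
    {g : γ → γ'} (hf : Measurable f) (hg : Measurable g) :
    mutualInfo (ρ.map (Prod.map f g)) ≤ mutualInfo ρ := by
  have hfst : (ρ.map (Prod.map f g)).map Prod.fst = (ρ.map Prod.fst).map f := by
    rw [Measure.map_map measurable_fst (hf.prodMap hg), Measure.map_map hf measurable_fst]
    rfl
  have hsnd : (ρ.map (Prod.map f g)).map Prod.snd = (ρ.map Prod.snd).map g := by
    rw [Measure.map_map measurable_snd (hf.prodMap hg), Measure.map_map hg measurable_snd]
    rfl
  have : IsProbabilityMeasure (ρ.map Prod.fst) :=
    Measure.isProbabilityMeasure_map measurable_fst.aemeasurable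
  have : IsProbabilityMeasure (ρ.map Prod.snd) :=
    Measure.isProbabilityMeasure_map measurable_snd.aemeasurable
  rw [mutualInfo, mutualInfo, hfst, hsnd, Measure.map_prod_map _ _ hf hg]
  exact klDiv_map_le _ _ (hf.prodMap hg)

end KullbackLeibler

namespace GaussianChannel

variable {α : Type*} [MeasurableSpace α] {v : ℝ≥0}

def joint (μ : Measure α) (c : α → ℝ) (v : ℝ≥0) : Measure (α × ℝ) :=
  (μ.prod (gaussianReal 0 v)).map (fun p => (p.1, c p.1 + p.2))

def outputDensity (ν : Measure ℝ) (v : ℝ≥0) (y : ℝ) : ℝ≥0∞ :=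
  ∫⁻ x, gaussianPDF x v y ∂ν

def likelihoodRatio (ν : Measure ℝ) (v : ℝ≥0) (p : ℝ × ℝ) : ℝ≥0∞ :=
  gaussianPDF p.1 v p.2 / outputDensity ν v p.2

@[fun_prop]
lemma measurable_outputDensity (ν : Measure ℝ) [SFinite ν] (v : ℝ≥0) :
    Measurable (outputDensity ν v) :=
  Measurable.lintegral_prod_left' (f := fun p : ℝ × ℝ => gaussianPDF p.1 v p.2) (by fun_prop)

@[fun_prop]
lemma measurable_likelihoodRatio (ν : Measure ℝ) [SFinite ν] (v : ℝ≥0) :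
    Measurable (likelihoodRatio ν v) := by
  unfold likelihoodRatio
  fun_prop

lemma gaussianPDF_le_ofReal (m : ℝ) (v : ℝ≥0) (x : ℝ) :
    gaussianPDF m v x ≤ ENNReal.ofReal (√(2 * π * v))⁻¹ := by
  refine ENNReal.ofReal_le_ofReal ?_
  rw [gaussianPDFReal]
  refine mul_le_of_le_one_right (by positivity) (Real.exp_le_one_iff.mpr ?_)
  exact div_nonpos_of_nonpos_of_nonneg (neg_nonpos.mpr (sq_nonneg _)) (by positivity)

lemma outputDensity_pos (ν : Measure ℝ) [NeZero ν] (hv : v ≠ 0) (y : ℝ) :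
    0 < outputDensity ν v y := by
  rw [outputDensity, lintegral_pos_iff_support (by fun_prop),
    Function.support_eq_univ fun x => (gaussianPDF_pos x hv y).ne', Measure.measure_univ_pos]
  exact NeZero.ne ν

lemma outputDensity_ne_top (ν : Measure ℝ) [IsFiniteMeasure ν] (y : ℝ) :
    outputDensity ν v y ≠ ∞ := by
  rw [outputDensity]
  refine ((lintegral_mono fun x => gaussianPDF_le_ofReal x v y).trans_lt ?_).ne
  rw [lintegral_const]
  exact ENNReal.mul_lt_top ENNReal.ofReal_lt_top (measure_lt_top ν _)

lemma gaussianReal_preimage_const_add (hv : v ≠ 0) (a : ℝ) (s : Set ℝ) (hs : MeasurableSet s) :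
    gaussianReal 0 v ((a + ·) ⁻¹' s) = ∫⁻ y in s, gaussianPDF a v y := by
  rw [← Measure.map_apply (measurable_const_add a) hs, gaussianReal_map_const_add, zero_add,
    gaussianReal_apply _ hv]

lemma joint_eq_withDensity (μ : Measure α) [SFinite μ] {c : α → ℝ} (hc : Measurable c)
    (hv : v ≠ 0) :
    joint μ c v = (μ.prod volume).withDensity (fun p => gaussianPDF (c p.1) v p.2) := by
  have hshear : Measurable (fun p : α × ℝ => (p.1, c p.1 + p.2)) := by fun_prop
  have hdens : Measurable (fun p : α × ℝ => gaussianPDF (c p.1) v p.2) := by fun_prop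
  ext B hB
  rw [joint, Measure.map_apply hshear hB, Measure.prod_apply (hshear hB), withDensity_apply _ hB,
    ← lintegral_indicator hB, lintegral_prod _ (hdens.indicator hB).aemeasurable]
  refine lintegral_congr fun x => ?_
  rw [show Prod.mk x ⁻¹' ((fun p : α × ℝ => (p.1, c p.1 + p.2)) ⁻¹' B)
      = (c x + ·) ⁻¹' (Prod.mk x ⁻¹' B) from rfl,
    gaussianReal_preimage_const_add hv _ _ (measurable_prodMk_left hB),
    ← lintegral_indicator (measurable_prodMk_left hB)]
  rfl

lemma conv_gaussianReal_eq_withDensity (ν : Measure ℝ) [SFinite ν] (hv : v ≠ 0) :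
    ν ∗ gaussianReal 0 v = volume.withDensity (outputDensity ν v) := by
  ext s hs
  rw [withDensity_apply _ hs, Measure.conv, Measure.map_apply measurable_add hs,
    Measure.prod_apply (measurable_add hs)]
  simp_rw [outputDensity]
  rw [lintegral_lintegral_swap (by fun_prop)]
  exact lintegral_congr fun x => gaussianReal_preimage_const_add hv x s hs

lemma joint_map_fst (μ : Measure α) [SFinite μ] {c : α → ℝ} (hc : Measurable c) :
    (joint μ c v).map Prod.fst = μ := by
  rw [joint, Measure.map_map measurable_fst (by fun_prop)]
  exact (Measure.map_fst_prod).trans (by simp)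

lemma joint_map_snd (μ : Measure α) [SFinite μ] {c : α → ℝ} (hc : Measurable c) :
    (joint μ c v).map Prod.snd = μ.map c ∗ gaussianReal 0 v := by
  have : (Prod.snd ∘ fun p : α × ℝ => (p.1, c p.1 + p.2)) = (fun p => p.1 + p.2) ∘ Prod.map c id :=
    rfl
  rw [joint, Measure.map_map measurable_snd (by fun_prop), this,
    ← Measure.map_map measurable_add (hc.prodMap measurable_id),
    ← Measure.map_prod_map _ _ hc measurable_id, Measure.map_id, Measure.conv]

lemma joint_map_prodMap (μ : Measure α) [SFinite μ] {c : α → ℝ} (hc : Measurable c) :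
    (joint μ c v).map (Prod.map c id) = joint (μ.map c) id v := by
  have : (Prod.map c id ∘ fun p : α × ℝ => (p.1, c p.1 + p.2))
      = (fun p : ℝ × ℝ => (p.1, p.1 + p.2)) ∘ Prod.map c id := rfl
  rw [joint, Measure.map_map (hc.prodMap measurable_id) (by fun_prop), this,
    ← Measure.map_map (by fun_prop) (hc.prodMap measurable_id),
    ← Measure.map_prod_map _ _ hc measurable_id, Measure.map_id, joint]
  rfl

lemma joint_eq_withDensity_likelihoodRatio (μ : Measure α) [IsProbabilityMeasure μ]
    {c : α → ℝ} (hc : Measurable c) (hv : v ≠ 0) :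
    joint μ c v = (μ.prod (μ.map c ∗ gaussianReal 0 v)).withDensity
      (likelihoodRatio (μ.map c) v ∘ Prod.map c id) := by
  have : IsProbabilityMeasure (μ.map c) := Measure.isProbabilityMeasure_map hc.aemeasurable
  rw [conv_gaussianReal_eq_withDensity _ hv,
    prod_withDensity_right (measurable_outputDensity _ v),
    ← withDensity_mul _ (f := fun p : α × ℝ => outputDensity (μ.map c) v p.2)
      (by fun_prop) (by fun_prop),
    joint_eq_withDensity μ hc hv]
  congr 1
  funext p
  simp only [Pi.mul_apply, Function.comp_apply, likelihoodRatio, Prod.map_fst, Prod.map_snd, id]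
  exact (ENNReal.mul_div_cancel (outputDensity_pos _ hv p.2).ne' (outputDensity_ne_top _ p.2)).symm

theorem mutualInfo_joint_eq (μ : Measure α) [IsProbabilityMeasure μ] {c : α → ℝ}
    (hc : Measurable c) (hv : v ≠ 0) :
    mutualInfo (joint μ c v) = mutualInfo (sisoJoint v (μ.map c)) := by
  change _ = mutualInfo (joint (μ.map c) id v)
  have : IsProbabilityMeasure (μ.map c) := Measure.isProbabilityMeasure_map hc.aemeasurable
  rw [mutualInfo, mutualInfo, joint_map_fst μ hc, joint_map_snd μ hc, joint_map_fst _ measurable_id,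
    joint_map_snd _ measurable_id, Measure.map_id, ← joint_map_prodMap μ hc]
  conv_rhs => rw [← Measure.map_id (μ := μ.map c ∗ gaussianReal 0 v),
    Measure.map_prod_map _ _ hc measurable_id]
  rw [joint_eq_withDensity_likelihoodRatio μ hc hv]
  exact (klDiv_map_withDensity_comp _ (hc.prodMap measurable_id) (by fun_prop)).symm

end GaussianChannel

section Reflection

variable {v : ℝ≥0}

instance isProbabilityMeasure_sisoJoint (ν : Measure ℝ) [IsProbabilityMeasure ν] :
    IsProbabilityMeasure (sisoJoint v ν) :=
  Measure.isProbabilityMeasure_map (by fun_prop)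

lemma sisoJoint_map_reflect (ν : Measure ℝ) [SFinite ν] (a : ℝ) :
    (sisoJoint v ν).map (Prod.map (a - ·) (a - ·)) = sisoJoint v (ν.map (a - ·)) := by
  have hnoise : (gaussianReal 0 v).map (fun z => -z) = gaussianReal 0 v := by
    rw [gaussianReal_map_neg, neg_zero]
  have hcomm : Prod.map (a - ·) (a - ·) ∘ (fun p : ℝ × ℝ => (p.1, p.1 + p.2))
      = (fun p : ℝ × ℝ => (p.1, p.1 + p.2)) ∘ Prod.map (a - ·) (fun z => -z) := by
    funext p
    ext
    · rfl
    · simp only [Function.comp_apply, Prod.map_fst, Prod.map_snd]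
      ring
  rw [sisoJoint, sisoJoint, Measure.map_map (by fun_prop) (by fun_prop), hcomm,
    ← Measure.map_map (by fun_prop) (by fun_prop), ← Measure.map_prod_map _ _ (by fun_prop)
      (by fun_prop), hnoise]

lemma mutualInfo_sisoJoint_le_reflect (ν : Measure ℝ) [IsProbabilityMeasure ν] (a : ℝ) :
    mutualInfo (sisoJoint v ν) ≤ mutualInfo (sisoJoint v (ν.map (a - ·))) := by
  have : IsProbabilityMeasure (ν.map (a - ·)) := Measure.isProbabilityMeasure_map (by fun_prop)
  have hinv : (ν.map (a - ·)).map (a - ·) = ν := by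
    rw [Measure.map_map (by fun_prop) (by fun_prop)]
    simp
  calc mutualInfo (sisoJoint v ν)
      = mutualInfo ((sisoJoint v (ν.map (a - ·))).map (Prod.map (a - ·) (a - ·))) := by
        rw [sisoJoint_map_reflect, hinv]
    _ ≤ _ := mutualInfo_map_prodMap_le _ (by fun_prop) (by fun_prop)

lemma mutualInfo_sisoJoint_le_sisoCapacity_half (ν : Measure ℝ) [IsProbabilityMeasure ν] {b : ℝ}
    (hν : ∀ᵐ x ∂ν, x ∈ Set.Icc 0 b) : mutualInfo (sisoJoint v ν) ≤ sisoCapacity v b (b / 2) := by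
  by_cases hmean : ∫ x, x ∂ν ≤ b / 2
  · exact le_iSup₂_of_le ν ⟨inferInstance, hν, hmean⟩ le_rfl
  have hr : Measurable (b - · : ℝ → ℝ) := by fun_prop
  have : IsProbabilityMeasure (ν.map (b - ·)) := Measure.isProbabilityMeasure_map hr.aemeasurable
  have hint : Integrable (fun x => x) ν := Integrable.of_mem_Icc 0 b aemeasurable_id hν
  refine (mutualInfo_sisoJoint_le_reflect ν b).trans
    (le_iSup₂_of_le (ν.map (b - ·)) ⟨inferInstance, ?_, ?_⟩ le_rfl)
  · refine (ae_map_iff hr.aemeasurable measurableSet_Icc).mpr ?_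
    filter_upwards [hν] with x hx
    exact ⟨by linarith [hx.2], by linarith [hx.1]⟩
  · rw [integral_map hr.aemeasurable (by fun_prop), integral_sub (integrable_const b) hint,
      integral_const, probReal_univ, one_smul]
    linarith

end Reflection

lemma sCum_eq_sum {n : ℕ} (h : Fin n → ℝ) : sCum h n = ∑ i, h i :=
  Finset.sum_congr rfl fun i _ => if_pos i.isLt

lemma sum_mul_mem_Icc_sCum_mul {n : ℕ} {h x : Fin n → ℝ} {A : ℝ} (hh : ∀ k, 0 ≤ h k)
    (hx : ∀ k, x k ∈ Set.Icc 0 A) : ∑ k, h k * x k ∈ Set.Icc 0 (sCum h n * A) := by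
  rw [sCum_eq_sum, Finset.sum_mul]
  exact ⟨Finset.sum_nonneg fun k _ => mul_nonneg (hh k) (hx k).1,
    Finset.sum_le_sum fun k _ => mul_le_mul_of_nonneg_left (hx k).2 (hh k)⟩

end

theorem miso_capacity_le_siso_capacity_general (n : ℕ) (h : Fin n → ℝ)
    (hpos : ∀ k, 0 < h k)
    (v : ℝ≥0) (hv : 0 < v)
    (A α : ℝ) :
    misoCapacity h v A (α * A)
      ≤ sisoCapacity v (sCum h n * A) (sCum h n * A / 2) := by
  refine iSup₂_le fun μ ⟨_, hpeak, _⟩ => ?_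
  have hc : Measurable (fun x : Fin n → ℝ => ∑ k, h k * x k) := by fun_prop
  have := Measure.isProbabilityMeasure_map (μ := μ) hc.aemeasurable
  have hsupp : ∀ᵐ y ∂μ.map (fun x => ∑ k, h k * x k), y ∈ Set.Icc 0 (sCum h n * A) := by
    refine (ae_map_iff hc.aemeasurable measurableSet_Icc).mpr ?_
    filter_upwards [ae_all_iff.mpr hpeak] with x hx
    exact sum_mul_mem_Icc_sCum_mul (fun k => (hpos k).le) hx
  exact (GaussianChannel.mutualInfo_joint_eq μ hc hv.ne').trans_le
    (mutualInfo_sisoJoint_le_sisoCapacity_half _ hsupp)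

theorem miso_capacity_le_siso_capacity (n : ℕ) (hn : 2 ≤ n) (h : Fin n → ℝ)
    (hord : ∀ i j : Fin n, i ≤ j → h j ≤ h i) (hpos : ∀ k, 0 < h k)
    (v : ℝ≥0) (hv : 0 < v)
    (A α : ℝ) (hA : 0 < A) (hα0 : 0 < α) (hαn : α ≤ (n : ℝ)) :
    misoCapacity h v A (α * A)
      ≤ sisoCapacity v (sCum h n * A) (sCum h n * A / 2) :=
  miso_capacity_le_siso_capacity_general n h hpos v hv A α
end
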